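/- Let e, q ∈ ℝ with 1/2 < e < 1 and q > 2, and define E, Q : ({0,1,2} × {0,1,2}) → ℝ by E(n,m) = e·n + m and Q(n,m) = q·n + m. Then E and Q are injective, and there is a unique bijection π of {0,1,2} × {0,1,2} satisfying Q(x) < Q(y) ⟺ E(π(x)) < E(π(y)) for all x, y; this π is given by (0,0)↦(0,0), (0,1)↦(1,0), (0,2)↦(0,1), (1,0)↦(2,0), (1,1)↦(1,1), (1,2)↦(0,2), (2,0)↦(2,1), (2,1)↦(1,2), (2,2)↦(2,2). -/
import Mathlib
set_option maxHeartbeats 1600000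

/-- Explicit table of the optimal permutation. -/
def fTab : Fin 3 × Fin 3 → Fin 3 × Fin 3 := fun x =>
  ![![((0:Fin 3),(0:Fin 3)),(1,0),(0,1)], ![(2,0),(1,1),(0,2)], ![(2,1),(1,2),(2,2)]] x.1 x.2

/-- Rank of a state in the energy order. -/
def rE : Fin 3 × Fin 3 → ℕ := fun x => ![![0,2,5],![1,4,7],![3,6,8]] x.1 x.2

/-- Rank of a state in the probability order. -/
def rQ : Fin 3 × Fin 3 → ℕ := fun x => 3 * x.1.val + x.2.val

lemma rank_eq {α : Type*} [Fintype α] [DecidableEq α] (g : α → ℕ)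
    (hg : Function.Injective g)
    (h : Finset.image g Finset.univ = Finset.range (Fintype.card α)) (x : α) :
    g x = (Finset.univ.filter fun y => g y < g x).card := by
  have himg : Finset.image g (Finset.univ.filter fun y => g y < g x)
      = Finset.range (g x) := by
    ext k
    simp only [Finset.mem_image, Finset.mem_filter, Finset.mem_univ, true_and,
      Finset.mem_range]
    constructor
    · rintro ⟨y, hy, rfl⟩; exact hy
    · intro hk
      have hx : g x ∈ Finset.range (Fintype.card α) :=
        h ▸ Finset.mem_image_of_mem g (Finset.mem_univ x)
      have hkmem : k ∈ Finset.range (Fintype.card α) := by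
        rw [Finset.mem_range] at hx ⊢; omega
      rw [← h, Finset.mem_image] at hkmem
      obtain ⟨y, -, rfl⟩ := hkmem
      exact ⟨y, hk, rfl⟩
  have hcard := Finset.card_image_of_injective
    (Finset.univ.filter fun y => g y < g x) hg
  rw [himg, Finset.card_range] at hcard
  omega

lemma hE_ord (e : ℝ) (he1 : 1/2 < e) (he2 : e < 1) (x y : Fin 3 × Fin 3) :
    e * ((x.1 : ℕ) : ℝ) + ((x.2 : ℕ) : ℝ) < e * ((y.1 : ℕ) : ℝ) + ((y.2 : ℕ) : ℝ)
      ↔ rE x < rE y := by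
  fin_cases x <;> fin_cases y <;> simp [rE] <;> linarith

lemma hQ_ord (q : ℝ) (hq : 2 < q) (x y : Fin 3 × Fin 3) :
    q * ((x.1 : ℕ) : ℝ) + ((x.2 : ℕ) : ℝ) < q * ((y.1 : ℕ) : ℝ) + ((y.2 : ℕ) : ℝ)
      ↔ rQ x < rQ y := by
  fin_cases x <;> fin_cases y <;> simp [rQ] <;> linarith

lemma rE_inj : Function.Injective rE := by decide

lemma rQ_inj : Function.Injective rQ := by decide

lemma rE_fTab : ∀ x, rE (fTab x) = rQ x := by decide

lemma rE_image :
    Finset.image rE Finset.univ = Finset.range (Fintype.card (Fin 3 × Fin 3)) := by decide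

lemma rQ_image :
    Finset.image rQ Finset.univ = Finset.range (Fintype.card (Fin 3 × Fin 3)) := by decide

/-- The table as a permutation. -/
noncomputable def π₀ : Equiv.Perm (Fin 3 × Fin 3) := Equiv.ofBijective fTab (by decide)

lemma image_comp_perm {α : Type*} [Fintype α] [DecidableEq α] (f : α → ℕ)
    (π : Equiv.Perm α) :
    Finset.image (fun y => f (π y)) Finset.univ = Finset.image f Finset.univ := by
  rw [show (fun y => f (π y)) = f ∘ π from rfl, ← Finset.image_image]
  congr 1
  exact Finset.image_univ_equiv π

lemma table_of_prop (e q : ℝ) (he1 : 1 / 2 < e) (he2 : e < 1) (hq : 2 < q)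
    (π : Equiv.Perm (Fin 3 × Fin 3))
    (hπ : ∀ x y : Fin 3 × Fin 3,
        q * ((x.1 : ℕ) : ℝ) + ((x.2 : ℕ) : ℝ) <
            q * ((y.1 : ℕ) : ℝ) + ((y.2 : ℕ) : ℝ) ↔
          e * (((π x).1 : ℕ) : ℝ) + (((π x).2 : ℕ) : ℝ) <
            e * (((π y).1 : ℕ) : ℝ) + (((π y).2 : ℕ) : ℝ)) :
    ∀ x, π x = fTab x := by
  intro x
  set g : Fin 3 × Fin 3 → ℕ := fun y => rE (π y) with hg
  have g_inj : Function.Injective g := fun a b hab => π.injective (rE_inj hab)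
  have g_img : Finset.image g Finset.univ
      = Finset.range (Fintype.card (Fin 3 × Fin 3)) := by
    rw [hg, image_comp_perm rE π, rE_image]
  have key : ∀ y, g y = rQ y := by
    intro y
    rw [rank_eq g g_inj g_img y, rank_eq rQ rQ_inj rQ_image y]
    congr 1
    ext z
    simp only [Finset.mem_filter, Finset.mem_univ, true_and]
    rw [← hQ_ord q hq z y, hπ z y, hE_ord e he1 he2 (π z) (π y)]
  have : rE (π x) = rE (fTab x) := by rw [rE_fTab]; exact key x
  exact rE_inj this

/-- For two 3-level systems with energy function `E(n,m) = e·n + m`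
(`1/2 < e < 1`) and negative log-probability `Q(n,m) = q·n + m` (`q > 2`),
both functions are injective, there is a unique permutation `π` of the nine
basis states matching the probability order to the energy order, and `π` is
the explicit table of the paper. -/
theorem stmt_18 (e q : ℝ) (he1 : 1 / 2 < e) (he2 : e < 1) (hq : 2 < q) :
    Function.Injective
      (fun x : Fin 3 × Fin 3 => e * ((x.1 : ℕ) : ℝ) + ((x.2 : ℕ) : ℝ)) ∧
    Function.Injective
      (fun x : Fin 3 × Fin 3 => q * ((x.1 : ℕ) : ℝ) + ((x.2 : ℕ) : ℝ)) ∧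
    (∃! π : Equiv.Perm (Fin 3 × Fin 3),
      ∀ x y : Fin 3 × Fin 3,
        q * ((x.1 : ℕ) : ℝ) + ((x.2 : ℕ) : ℝ) <
            q * ((y.1 : ℕ) : ℝ) + ((y.2 : ℕ) : ℝ) ↔
          e * (((π x).1 : ℕ) : ℝ) + (((π x).2 : ℕ) : ℝ) <
            e * (((π y).1 : ℕ) : ℝ) + (((π y).2 : ℕ) : ℝ)) ∧
    (∀ π : Equiv.Perm (Fin 3 × Fin 3),
      (∀ x y : Fin 3 × Fin 3,
        q * ((x.1 : ℕ) : ℝ) + ((x.2 : ℕ) : ℝ) <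
            q * ((y.1 : ℕ) : ℝ) + ((y.2 : ℕ) : ℝ) ↔
          e * (((π x).1 : ℕ) : ℝ) + (((π x).2 : ℕ) : ℝ) <
            e * (((π y).1 : ℕ) : ℝ) + (((π y).2 : ℕ) : ℝ)) →
        π (0, 0) = (0, 0) ∧ π (0, 1) = (1, 0) ∧ π (0, 2) = (0, 1) ∧
        π (1, 0) = (2, 0) ∧ π (1, 1) = (1, 1) ∧ π (1, 2) = (0, 2) ∧
        π (2, 0) = (2, 1) ∧ π (2, 1) = (1, 2) ∧ π (2, 2) = (2, 2)) := by
  have hπ₀ : ∀ x y : Fin 3 × Fin 3,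
      q * ((x.1 : ℕ) : ℝ) + ((x.2 : ℕ) : ℝ) <
          q * ((y.1 : ℕ) : ℝ) + ((y.2 : ℕ) : ℝ) ↔
        e * (((π₀ x).1 : ℕ) : ℝ) + (((π₀ x).2 : ℕ) : ℝ) <
          e * (((π₀ y).1 : ℕ) : ℝ) + (((π₀ y).2 : ℕ) : ℝ) := by
    intro x y
    rw [hQ_ord q hq x y, hE_ord e he1 he2 (π₀ x) (π₀ y)]
    show rQ x < rQ y ↔ rE (fTab x) < rE (fTab y)
    rw [rE_fTab, rE_fTab]
  refine ⟨?_, ?_, ⟨π₀, hπ₀, ?_⟩, ?_⟩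
  · intro x y hxy
    have h1 := (hE_ord e he1 he2 x y).not.mp (by simp only at hxy; rw [hxy]; exact lt_irrefl _)
    have h2 := (hE_ord e he1 he2 y x).not.mp (by simp only at hxy; rw [hxy]; exact lt_irrefl _)
    exact rE_inj (by omega)
  · intro x y hxy
    have h1 := (hQ_ord q hq x y).not.mp (by simp only at hxy; rw [hxy]; exact lt_irrefl _)
    have h2 := (hQ_ord q hq y x).not.mp (by simp only at hxy; rw [hxy]; exact lt_irrefl _)
    exact rQ_inj (by omega)
  · intro π hπ
    exact Equiv.ext fun x => table_of_prop e q he1 he2 hq π hπ x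
  · intro π hπ
    have h := table_of_prop e q he1 he2 hq π hπ
    refine ⟨h _, h _, h _, h _, h _, h _, h _, h _, h _⟩
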